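/- arXiv:2509.06701 — 5 statements merged into one kernel-verified Lean document; each statement's English description precedes it below -/
import Mathlib

section
/- Let O = {o_A, o_B} be a two-element outcome space and let x_1, x_2 ∈ (0,1) with x_1 ≠ x_2 be the probabilities two agents assign to o_A. Let β_1, β_2 > 0 with β_1 + β_2 = 1, and let x = x_1^{β_1} x_2^{β_2} / (x_1^{β_1} x_2^{β_2} + (1−x_1)^{β_1}(1−x_2)^{β_2}) be the logarithmic pool probability of o_A. Define Δ_i = (x − x_i) · log(x_i/(1−x_i)) for i = 1,2. Then it is impossible that Δ_1 ≥ 0 and Δ_2 ≥ 0 with at least one inequality strict. -/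
lemma pool_between (x1 x2 b1 b2 : ℝ) (h1 : x1 ∈ Set.Ioo (0:ℝ) 1)
    (h2 : x2 ∈ Set.Ioo (0:ℝ) 1) (hlt : x1 < x2) (hb1 : 0 < b1) (hb2 : 0 < b2)
    (hsum : b1 + b2 = 1) :
    x1 < x1 ^ b1 * x2 ^ b2 / (x1 ^ b1 * x2 ^ b2 + (1 - x1) ^ b1 * (1 - x2) ^ b2) ∧
    x1 ^ b1 * x2 ^ b2 / (x1 ^ b1 * x2 ^ b2 + (1 - x1) ^ b1 * (1 - x2) ^ b2) < x2 := by
  obtain ⟨hx1, hx1'⟩ := h1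
  obtain ⟨hx2, hx2'⟩ := h2
  have hm1 : 0 < 1 - x1 := by linarith
  have hm2 : 0 < 1 - x2 := by linarith
  have ha : 0 < x1 ^ b1 * x2 ^ b2 :=
    mul_pos (Real.rpow_pos_of_pos hx1 b1) (Real.rpow_pos_of_pos hx2 b2)
  have hb : 0 < (1 - x1) ^ b1 * (1 - x2) ^ b2 :=
    mul_pos (Real.rpow_pos_of_pos hm1 b1) (Real.rpow_pos_of_pos hm2 b2)
  have hd : 0 < x1 ^ b1 * x2 ^ b2 + (1 - x1) ^ b1 * (1 - x2) ^ b2 := by linarith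
  -- key rpow identities: write x1 = x1^b1 * x1^b2, etc.
  have e1 : x1 = x1 ^ b1 * x1 ^ b2 := by
    rw [← Real.rpow_add hx1, hsum, Real.rpow_one]
  have e1' : 1 - x1 = (1 - x1) ^ b1 * (1 - x1) ^ b2 := by
    rw [← Real.rpow_add hm1, hsum, Real.rpow_one]
  have e2 : x2 = x2 ^ b1 * x2 ^ b2 := by
    rw [← Real.rpow_add hx2, hsum, Real.rpow_one]
  have e2' : 1 - x2 = (1 - x2) ^ b1 * (1 - x2) ^ b2 := by
    rw [← Real.rpow_add hm2, hsum, Real.rpow_one]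
  have hc1 : 0 < x1 ^ b1 * (1 - x1) ^ b1 :=
    mul_pos (Real.rpow_pos_of_pos hx1 b1) (Real.rpow_pos_of_pos hm1 b1)
  have hc2 : 0 < x2 ^ b2 * (1 - x2) ^ b2 :=
    mul_pos (Real.rpow_pos_of_pos hx2 b2) (Real.rpow_pos_of_pos hm2 b2)
  -- core strict inequality: (x1*(1-x2))^c < (x2*(1-x1))^c for c = b1, b2
  have hcore : x1 * (1 - x2) < x2 * (1 - x1) := by nlinarith
  have key : ∀ c : ℝ, 0 < c →
      x1 ^ c * (1 - x2) ^ c < x2 ^ c * (1 - x1) ^ c := by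
    intro c hc
    rw [← Real.mul_rpow hx1.le hm2.le, ← Real.mul_rpow hx2.le hm1.le]
    exact Real.rpow_lt_rpow (by positivity) hcore hc
  constructor
  · rw [lt_div_iff₀ hd]
    have h := key b2 hb2
    nlinarith [mul_lt_mul_of_pos_left h hc1]
  · rw [div_lt_iff₀ hd]
    have h := key b1 hb1
    nlinarith [mul_lt_mul_of_pos_left h hc2]

/-- Binary-outcome impossibility of strictly unanimous benefit under logarithmic
pooling with epistemic (log-score) welfare. -/
theorem stmt2 (x1 x2 : ℝ) (h1 : x1 ∈ Set.Ioo (0:ℝ) 1) (h2 : x2 ∈ Set.Ioo (0:ℝ) 1)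
    (hne : x1 ≠ x2) (b1 b2 : ℝ) (hb1 : 0 < b1) (hb2 : 0 < b2) (hsum : b1 + b2 = 1) :
    let x := x1 ^ b1 * x2 ^ b2 / (x1 ^ b1 * x2 ^ b2 + (1 - x1) ^ b1 * (1 - x2) ^ b2)
    let Δ1 := (x - x1) * Real.log (x1 / (1 - x1))
    let Δ2 := (x - x2) * Real.log (x2 / (1 - x2))
    ¬ (0 ≤ Δ1 ∧ 0 ≤ Δ2 ∧ (0 < Δ1 ∨ 0 < Δ2)) := by
  intro x Δ1 Δ2
  rintro ⟨hΔ1, hΔ2, -⟩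
  obtain ⟨hx1, hx1'⟩ := h1
  obtain ⟨hx2, hx2'⟩ := h2
  have hm1 : 0 < 1 - x1 := by linarith
  have hm2 : 0 < 1 - x2 := by linarith
  -- establish min < x < max
  have hbetween : (x1 < x ∧ x < x2) ∨ (x2 < x ∧ x < x1) := by
    rcases lt_or_gt_of_ne hne with hlt | hgt
    · exact Or.inl (pool_between x1 x2 b1 b2 ⟨hx1, hx1'⟩ ⟨hx2, hx2'⟩ hlt hb1 hb2 hsum)
    · have h := pool_between x2 x1 b2 b1 ⟨hx2, hx2'⟩ ⟨hx1, hx1'⟩ hgt hb2 hb1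
        (by linarith)
      have hx : x = x2 ^ b2 * x1 ^ b1 /
          (x2 ^ b2 * x1 ^ b1 + (1 - x2) ^ b2 * (1 - x1) ^ b1) := by
        simp only [x]; ring_nf
      rw [hx]
      exact Or.inr h
  -- from the signs of Δ, deduce constraints on x1, x2
  have log_sign : ∀ y : ℝ, 0 < y → y < 1 → 0 ≤ Real.log (y / (1 - y)) → (1:ℝ)/2 ≤ y := by
    intro y hy hy' hlog
    by_contra hcon
    push_neg at hcon
    have : y / (1 - y) < 1 := by
      rw [div_lt_one (by linarith)]; linarith
    have := Real.log_neg (div_pos hy (by linarith)) this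
    linarith
  have log_sign' : ∀ y : ℝ, 0 < y → y < 1 → Real.log (y / (1 - y)) ≤ 0 → y ≤ (1:ℝ)/2 := by
    intro y hy hy' hlog
    by_contra hcon
    push_neg at hcon
    have : 1 < y / (1 - y) := by
      rw [lt_div_iff₀ (by linarith)]; linarith
    have := Real.log_pos this
    linarith
  rcases hbetween with ⟨ha, hb⟩ | ⟨ha, hb⟩
  · -- x1 < x < x2 : Δ1 ≥ 0 forces log1 ≥ 0, Δ2 ≥ 0 forces log2 ≤ 0
    have l1 : 0 ≤ Real.log (x1 / (1 - x1)) :=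
      nonneg_of_mul_nonneg_left (by simpa [Δ1, mul_comm] using hΔ1) (by linarith)
    have l2 : Real.log (x2 / (1 - x2)) ≤ 0 := by
      by_contra hcon
      push_neg at hcon
      have : Δ2 < 0 := mul_neg_of_neg_of_pos (by simp only [x] at hb ⊢; linarith) hcon
      linarith
    have := log_sign x1 hx1 hx1' l1
    have := log_sign' x2 hx2 hx2' l2
    simp only [x] at ha hb
    linarith
  · have l2 : 0 ≤ Real.log (x2 / (1 - x2)) :=
      nonneg_of_mul_nonneg_left (by simpa [Δ2, mul_comm] using hΔ2) (by linarith)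
    have l1 : Real.log (x1 / (1 - x1)) ≤ 0 := by
      by_contra hcon
      push_neg at hcon
      have : Δ1 < 0 := mul_neg_of_neg_of_pos (by simp only [x] at hb ⊢; linarith) hcon
      linarith
    have := log_sign x2 hx2 hx2' l2
    have := log_sign' x1 hx1 hx1' l1
    simp only [x] at ha hb
    linarith
end

section
/- Let P_1, ..., P_n be strictly positive probability distributions on a finite set O, not all identical, and let β_1, ..., β_n > 0 with Σ β_i = 1. Let P = Σ_i β_i P_i be the linear opinion pool. Then Σ_i β_i Δ_i < 0, where Δ_i = E_P[log P_i] − E_{P_i}[log P_i]. In particular, it is impossible that Δ_i ≥ 0 for all i with strict inequality for some i. -/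
open Finset

/-- Impossibility of strictly unanimous benefit under the linear opinion pool
with epistemic (log-score) welfare. -/
theorem stmt4 {O : Type*} [Fintype O] {n : ℕ}
    (P : Fin n → O → ℝ) (β : Fin n → ℝ)
    (hP : ∀ i o, 0 < P i o) (hP1 : ∀ i, ∑ o, P i o = 1)
    (hβ : ∀ i, 0 < β i) (hsum : ∑ i, β i = 1)
    (hne : ∃ i j, P i ≠ P j) :
    let Pc : O → ℝ := fun o => ∑ i, β i * P i o
    let Δ : Fin n → ℝ := fun i =>
      (∑ o, Pc o * Real.log (P i o)) - ∑ o, P i o * Real.log (P i o)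
    (∑ i, β i * Δ i < 0) ∧ ¬ ((∀ i, 0 ≤ Δ i) ∧ ∃ i, 0 < Δ i) := by
  intro Pc Δ
  obtain ⟨i0, j0, hij⟩ := hne
  obtain ⟨o0, ho0⟩ : ∃ o, P i0 o ≠ P j0 o := by
    by_contra h
    push_neg at h
    exact hij (funext h)
  have hPc : ∀ o, 0 < Pc o := by
    intro o
    have : 0 < β i0 * P i0 o := mul_pos (hβ i0) (hP i0 o)
    exact Finset.sum_pos' (fun i _ => le_of_lt (mul_pos (hβ i) (hP i o)))
      ⟨i0, mem_univ i0, this⟩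
  -- First inequality: Jensen for log (strict at o0)
  have hA : ∀ o : O, (∑ i, β i * Real.log (P i o)) ≤ Real.log (Pc o) := by
    intro o
    have := strictConcaveOn_log_Ioi.concaveOn.le_map_sum
      (t := univ) (w := β) (p := fun i => P i o)
      (fun i _ => (hβ i).le) hsum (fun i _ => hP i o)
    simpa [smul_eq_mul] using this
  have hA0 : (∑ i, β i * Real.log (P i o0)) < Real.log (Pc o0) := by
    have := strictConcaveOn_log_Ioi.lt_map_sum
      (t := univ) (w := β) (p := fun i => P i o0)
      (fun i _ => hβ i) hsum (fun i _ => hP i o0)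
      ⟨i0, mem_univ i0, j0, mem_univ j0, ho0⟩
    simpa [smul_eq_mul] using this
  have hAlt : (∑ o, Pc o * ∑ i, β i * Real.log (P i o)) < ∑ o, Pc o * Real.log (Pc o) := by
    apply Finset.sum_lt_sum (fun o _ => mul_le_mul_of_nonneg_left (hA o) (hPc o).le)
    exact ⟨o0, mem_univ o0, mul_lt_mul_of_pos_left hA0 (hPc o0)⟩
  -- Second inequality: convexity of x * log x
  have hB : ∀ o : O, Pc o * Real.log (Pc o) ≤ ∑ i, β i * (P i o * Real.log (P i o)) := by
    intro o
    have := Real.convexOn_mul_log.map_sum_le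
      (t := univ) (w := β) (p := fun i => P i o)
      (fun i _ => (hβ i).le) hsum (fun i _ => (hP i o).le)
    simpa [smul_eq_mul] using this
  have hBsum : (∑ o, Pc o * Real.log (Pc o)) ≤
      ∑ i, β i * ∑ o, P i o * Real.log (P i o) := by
    calc (∑ o, Pc o * Real.log (Pc o))
        ≤ ∑ o, ∑ i, β i * (P i o * Real.log (P i o)) := Finset.sum_le_sum (fun o _ => hB o)
      _ = ∑ i, ∑ o, β i * (P i o * Real.log (P i o)) := Finset.sum_comm
      _ = ∑ i, β i * ∑ o, P i o * Real.log (P i o) := by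
          simp [Finset.mul_sum]
  have hmain : ∑ i, β i * Δ i < 0 := by
    have hsplit : ∑ i, β i * Δ i =
        (∑ o, Pc o * ∑ i, β i * Real.log (P i o)) -
        ∑ i, β i * ∑ o, P i o * Real.log (P i o) := by
      simp only [Δ, mul_sub, Finset.sum_sub_distrib, Finset.mul_sum]
      congr 1
      rw [Finset.sum_comm]
      exact Finset.sum_congr rfl fun o _ => Finset.sum_congr rfl fun i _ => by ring
    rw [hsplit]
    linarith
  refine ⟨hmain, ?_⟩
  rintro ⟨hall, -⟩
  have : 0 ≤ ∑ i, β i * Δ i :=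
    Finset.sum_nonneg (fun i _ => mul_nonneg (hβ i).le (hall i))
  linarith
end

section
/- For every n ≥ 2 there exist an outcome set O with |O| ≥ 3, strictly positive probability distributions P_1, ..., P_n on O, and weights β_i = 1/n, such that the logarithmic pool P (with P(o) proportional to Π_i P_i(o)^{β_i}) satisfies E_P[log P_i] > E_{P_i}[log P_i] for every i. -/
open Finset

noncomputable section LogPoolAux

def lpEps (n : ℕ) : ℝ := ((64:ℝ) * n ^ 2)⁻¹
def lpC (n : ℕ) : ℝ := lpEps n ^ (n + 1)
def lpA (n : ℕ) : ℝ := 1 - lpEps n - ((n:ℝ) - 1) * lpC n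
def lpP (n : ℕ) (i : Fin n) (o : Fin (n + 1)) : ℝ :=
  if o = 0 then lpA n else if o = i.succ then lpEps n else lpC n

lemma rpow_sum_const {x : ℝ} (hx : 0 < x) {α : Type*} (s : Finset α) (f : α → ℝ) :
    ∏ a ∈ s, x ^ f a = x ^ (∑ a ∈ s, f a) := by
  classical
  induction s using Finset.cons_induction with
  | empty => simp
  | cons a s ha ih => rw [Finset.prod_cons, Finset.sum_cons, Real.rpow_add hx, ih]

lemma sum_ite_fin {n : ℕ} (i : Fin n) (X Y : ℝ) :
    ∑ k : Fin n, (if k = i then X else Y) = X + ((n:ℝ) - 1) * Y := by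
  have h : ∀ k : Fin n, (if k = i then X else Y) = Y + (if k = i then X - Y else 0) := by
    intro k; split <;> ring
  simp_rw [h, Finset.sum_add_distrib, Finset.sum_const, Finset.sum_ite_eq',
    Finset.mem_univ, card_univ, Fintype.card_fin, if_true]
  ring

section
variable {n : ℕ} (hn : 2 ≤ n)
include hn

lemma lpN2 : (2:ℝ) ≤ (n:ℝ) := by exact_mod_cast hn

lemma lpEps_pos : 0 < lpEps n := by
  have h := lpN2 hn
  have : (0:ℝ) < 64 * (n:ℝ)^2 := by positivity
  exact inv_pos.mpr this

lemma lpEps_le : lpEps n ≤ 1/256 := by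
  have h := lpN2 hn
  rw [lpEps, inv_le_comm₀ (by positivity) (by norm_num)]
  nlinarith

lemma lpEps_mul : (n:ℝ)^2 * lpEps n = 1/64 := by
  have h := lpN2 hn
  rw [lpEps]; field_simp

lemma lpEps_le_one : lpEps n ≤ 1 := le_trans (lpEps_le hn) (by norm_num)

lemma lpEps_pow_le : lpEps n ^ n ≤ lpEps n ^ 2 :=
  pow_le_pow_of_le_one (lpEps_pos hn).le (lpEps_le_one hn) hn

lemma lpKey : (n:ℝ)^2 * lpEps n ^ n ≤ lpEps n / 64 := by
  have h1 := lpEps_pow_le hn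
  have h2 := lpEps_mul hn
  have h3 := lpEps_pos hn
  have h4 := lpEps_le hn
  have h5 := lpN2 hn
  nlinarith [sq_nonneg ((n:ℝ))]

lemma lpC_le : ((n:ℝ) - 1) * lpC n ≤ lpEps n := by
  have h1 := lpKey hn
  have h3 := lpEps_pos hn
  have h5 := lpN2 hn
  have hp : (0:ℝ) ≤ lpEps n ^ n := by positivity
  have hc : lpC n = lpEps n ^ n * lpEps n := by rw [lpC, pow_succ]
  nlinarith [lpEps_le hn]

lemma lpA_lb : 1 - 2 * lpEps n ≤ lpA n := by
  have := lpC_le hn; rw [lpA]; linarith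

lemma lpA_half : (1:ℝ)/2 ≤ lpA n := by
  have := lpA_lb hn; have := lpEps_le hn; linarith

lemma lpA_pos : 0 < lpA n := lt_of_lt_of_le (by norm_num) (lpA_half hn)

lemma lpA_lt_one : lpA n < 1 := by
  have h3 := lpEps_pos hn
  have h5 := lpN2 hn
  have hc : (0:ℝ) < lpC n := by rw [lpC]; positivity
  rw [lpA]; nlinarith

lemma lpC_pos : (0:ℝ) < lpC n := by
  have := lpEps_pos hn; rw [lpC]; positivity

lemma lpP_pos (i : Fin n) (o : Fin (n+1)) : 0 < lpP n i o := by
  rw [lpP]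
  split_ifs
  · exact lpA_pos hn
  · exact lpEps_pos hn
  · exact lpC_pos hn

lemma lpP_succ (i : Fin n) (k : Fin n) :
    lpP n i (k.succ) = if k = i then lpEps n else lpC n := by
  rw [lpP, if_neg (Fin.succ_ne_zero k)]
  by_cases h : k = i
  · subst h; simp
  · rw [if_neg (by simpa [Fin.succ_inj] using h), if_neg h]

lemma lpSum (i : Fin n) : ∑ o : Fin (n+1), lpP n i o = 1 := by
  rw [Fin.sum_univ_succ]
  have h0 : lpP n i 0 = lpA n := by simp [lpP]
  simp_rw [h0, lpP_succ hn i, sum_ite_fin i (lpEps n) (lpC n)]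
  rw [lpA]; ring

lemma lpG0 : ∏ j : Fin n, lpP n j 0 ^ ((1:ℝ)/n) = lpA n := by
  have ha := lpA_pos hn
  have hne : (n:ℝ) ≠ 0 := by have := lpN2 hn; linarith
  have h1 : ∀ j : Fin n, lpP n j 0 = lpA n := by intro j; simp [lpP]
  simp_rw [h1]
  rw [rpow_sum_const ha, Finset.sum_const, card_univ, Fintype.card_fin,
    nsmul_eq_mul, mul_one_div, div_self hne, Real.rpow_one]

lemma lpGsucc (k : Fin n) :
    ∏ j : Fin n, lpP n j k.succ ^ ((1:ℝ)/n) = lpEps n ^ n := by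
  have hε := lpEps_pos hn
  have hne : (n:ℝ) ≠ 0 := by have := lpN2 hn; linarith
  have h1 : ∀ j : Fin n, lpP n j k.succ ^ ((1:ℝ)/n)
      = lpEps n ^ ((if j = k then (1:ℝ) else (n+1)) * (1/n)) := by
    intro j
    rw [lpP, if_neg (Fin.succ_ne_zero k)]
    by_cases h : j = k
    · subst h
      rw [if_pos rfl, if_pos rfl, one_mul]
    · rw [if_neg (by simpa [Fin.succ_inj] using Ne.symm h), if_neg h, lpC,
        Real.rpow_mul hε.le]
      congr 1
      rw [← Real.rpow_natCast (lpEps n) (n+1)]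
      push_cast
      ring_nf
  simp_rw [h1]
  rw [rpow_sum_const hε, ← Finset.sum_mul, sum_ite_fin k 1 ((n:ℝ)+1)]
  have : (1 + ((n:ℝ) - 1) * ((n:ℝ) + 1)) * (1/(n:ℝ)) = (n:ℝ) := by
    field_simp; ring
  rw [this, Real.rpow_natCast]

lemma lpZ : ∑ u : Fin (n+1), ∏ j : Fin n, lpP n j u ^ ((1:ℝ)/n)
    = lpA n + (n:ℝ) * lpEps n ^ n := by
  rw [Fin.sum_univ_succ, lpG0 hn]
  simp_rw [lpGsucc hn]
  rw [Finset.sum_const, card_univ, Fintype.card_fin, nsmul_eq_mul]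

lemma lpLogA : -Real.log (lpA n) ≤ 4 * lpEps n := by
  have ha := lpA_pos hn
  have ha2 := lpA_half hn
  have hlb := lpA_lb hn
  have hε := lpEps_pos hn
  have h := Real.log_le_sub_one_of_pos (x := (lpA n)⁻¹) (by positivity)
  rw [Real.log_inv] at h
  have h2 : (lpA n)⁻¹ - 1 = (1 - lpA n) / lpA n := by field_simp
  rw [h2] at h
  have h3 : (1 - lpA n) / lpA n ≤ 2 * (1 - lpA n) := by
    rw [div_le_iff₀ ha]
    nlinarith [lpA_lt_one hn]
  linarith

lemma lpLogEps : Real.log (lpEps n) ≤ -1 := by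
  have hε := lpEps_pos hn
  have h5 := lpN2 hn
  have h : (1:ℝ) ≤ Real.log ((lpEps n)⁻¹) := by
    rw [Real.le_log_iff_exp_le (by positivity)]
    have he : Real.exp 1 < 2.7182818286 := Real.exp_one_lt_d9
    have : (lpEps n)⁻¹ = 64 * (n:ℝ)^2 := by rw [lpEps, inv_inv]
    rw [this]; nlinarith
  rw [Real.log_inv] at h
  linarith

end
end LogPoolAux

set_option maxHeartbeats 1000000 in
/-- Existence of unanimously (strictly) compositional groups: for every `n ≥ 2`
there is an outcome space with at least 3 elements and strictly positive beliefs
`P i` such that, under the logarithmic pool with uniform weights `1/n`, every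
agent strictly benefits in epistemic utility. -/
theorem stmt5 (n : ℕ) (hn : 2 ≤ n) :
    ∃ (m : ℕ), 3 ≤ m ∧ ∃ P : Fin n → Fin m → ℝ,
      (∀ i o, 0 < P i o) ∧ (∀ i, ∑ o, P i o = 1) ∧
      (∀ i : Fin n,
        (∑ o, ((∏ j, P j o ^ ((1:ℝ)/n)) / (∑ u, ∏ j, P j u ^ ((1:ℝ)/n)))
            * Real.log (P i o))
          > ∑ o, P i o * Real.log (P i o)) := by
  refine ⟨n + 1, by omega, lpP n, lpP_pos hn, lpSum hn, ?_⟩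
  intro i
  rw [lpZ hn]
  rw [Fin.sum_univ_succ, Fin.sum_univ_succ]
  have h0 : lpP n i 0 = lpA n := by simp [lpP]
  rw [lpG0 hn, h0]
  simp_rw [lpGsucc hn, lpP_succ hn i]
  -- abbreviations
  set ε := lpEps n with hεdef
  set a := lpA n with hadef
  set Z := a + (n:ℝ) * ε ^ n with hZdef
  set la := Real.log a with hladef
  set lε := Real.log ε with hlεdef
  have hlc : Real.log (lpC n) = ((n:ℝ) + 1) * lε := by
    rw [lpC, Real.log_pow]; push_cast; ring
  have hsum1 : ∑ k : Fin n, ε ^ n / Z * Real.log (if k = i then ε else lpC n)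
      = ε ^ n / Z * lε + ((n:ℝ) - 1) * (ε ^ n / Z * (((n:ℝ) + 1) * lε)) := by
    have h : ∀ k : Fin n, ε ^ n / Z * Real.log (if k = i then ε else lpC n)
        = if k = i then ε ^ n / Z * lε else ε ^ n / Z * (((n:ℝ) + 1) * lε) := by
      intro k; split <;> simp [hlc, hlεdef]
    simp_rw [h, sum_ite_fin]
  have hsum2 : ∑ k : Fin n, (if k = i then ε else lpC n) * Real.log (if k = i then ε else lpC n)
      = ε * lε + ((n:ℝ) - 1) * ((ε ^ n * ε) * (((n:ℝ) + 1) * lε)) := by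
    have h : ∀ k : Fin n, (if k = i then ε else lpC n) * Real.log (if k = i then ε else lpC n)
        = if k = i then ε * lε else (ε ^ n * ε) * (((n:ℝ) + 1) * lε) := by
      intro k
      split
      · rfl
      · rw [hlc, lpC, pow_succ]
    simp_rw [h, sum_ite_fin]
  rw [hsum1, hsum2]
  clear hsum1 hsum2 hlc h0 i
  -- numeric facts
  have hN : (2:ℝ) ≤ (n:ℝ) := lpN2 hn
  have hε : (0:ℝ) < ε := lpEps_pos hn
  have hε1 : ε ≤ 1/256 := lpEps_le hn
  have hNε : (n:ℝ)^2 * ε = 1/64 := lpEps_mul hn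
  have heN : (0:ℝ) ≤ ε ^ n := by positivity
  have heN2 : (n:ℝ)^2 * ε ^ n ≤ ε / 64 := lpKey hn
  have ha2 : (1:ℝ)/2 ≤ a := lpA_half hn
  have ha1 : a < 1 := lpA_lt_one hn
  have halb : 1 - 2*ε ≤ a := lpA_lb hn
  have haub : a ≤ 1 - ε := by
    have hc := lpC_pos hn
    have := lpC_le hn
    rw [hadef, lpA]
    nlinarith [hc, hN]
  have hc_le : ((n:ℝ) - 1) * (ε ^ n * ε) ≤ ε := by
    have := lpC_le hn
    rwa [lpC, pow_succ] at this
  have hla : la ≤ 0 := Real.log_nonpos (by linarith) (by linarith)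
  have hla2 : -la ≤ 4 * ε := lpLogA hn
  have hlε : lε ≤ -1 := lpLogEps hn
  -- bounds on Z
  have heN_small : ε ^ n ≤ ε / 256 := by
    nlinarith [mul_nonneg (by nlinarith : (0:ℝ) ≤ (n:ℝ)^2 - 4) heN]
  have hNeN : (n:ℝ) * ε ^ n ≤ ε / 128 := by
    nlinarith [mul_nonneg (by nlinarith : (0:ℝ) ≤ (n:ℝ)^2 - 2*(n:ℝ)) heN]
  have hZ2 : (1:ℝ)/2 ≤ Z := by
    have : (0:ℝ) ≤ (n:ℝ) * ε ^ n := by positivity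
    rw [hZdef]; linarith
  have hZpos : (0:ℝ) < Z := by linarith
  have hZ1 : Z ≤ 1 := by
    rw [hZdef]
    have : (n:ℝ) * ε ^ n ≤ ε := by linarith
    linarith
  have h1mZ : 1 - Z ≤ 2 * ε := by
    rw [hZdef]
    have : (0:ℝ) ≤ (n:ℝ) * ε ^ n := by positivity
    linarith
  -- bounds on the pooled quotients
  have hq_lb : a ≤ a / Z := by
    rw [le_div_iff₀ hZpos]
    nlinarith
  have hq_ub : a / Z ≤ a + 4 * ε := by
    rw [div_le_iff₀ hZpos]
    nlinarith
  have hs_lb : (0:ℝ) ≤ ε ^ n / Z := by positivity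
  have hs_ub : ε ^ n / Z ≤ 2 * ε ^ n := by
    rw [div_le_iff₀ hZpos]
    nlinarith
  set q := a / Z
  set s := ε ^ n / Z
  -- term bounds
  have hT1 : -(16 * ε^2) ≤ (q - a) * la := by
    nlinarith [hq_lb, hq_ub, hla, hla2]
  have hT2 : (ε - ε/128) * (-lε) ≤ (s - ε) * lε := by
    have h : (ε - s) ≤ ε - 0 := by linarith
    have hL0 : (0:ℝ) ≤ -lε := by linarith
    have hse : ε - ε/128 ≤ ε - s := by
      have : s ≤ ε / 128 := le_trans hs_ub (by linarith [heN_small])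
      linarith
    nlinarith [mul_le_mul_of_nonneg_right hse hL0]
  have hT3 : (ε/32) * lε ≤ (((n:ℝ)^2 - 1) * (s - ε ^ n * ε)) * lε := by
    have hcoef : ((n:ℝ)^2 - 1) * (s - ε ^ n * ε) ≤ ε/32 := by
      have h1 : s - ε ^ n * ε ≤ s := by nlinarith
      have h2 : ((n:ℝ)^2 - 1) * (s - ε ^ n * ε) ≤ ((n:ℝ)^2) * s := by
        nlinarith [hs_lb]
      have h3 : ((n:ℝ)^2) * s ≤ ((n:ℝ)^2) * (2 * ε ^ n) := by
        nlinarith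
      nlinarith
    exact mul_le_mul_of_nonpos_right hcoef (by linarith : lε ≤ 0)
  have hεL : ε ≤ ε * (-lε) := by
    have h := mul_le_mul_of_nonneg_left (show (1:ℝ) ≤ -lε by linarith) hε.le
    linarith
  have hε2 : ε^2 ≤ ε/256 := by
    have h := mul_le_mul_of_nonneg_left hε1 hε.le
    nlinarith [h]
  have key : (q * la + (s * lε + ((n:ℝ) - 1) * (s * (((n:ℝ) + 1) * lε))))
      - (a * la + (ε * lε + ((n:ℝ) - 1) * ((ε ^ n * ε) * (((n:ℝ) + 1) * lε))))
      = (q - a) * la + (s - ε) * lε + (((n:ℝ)^2 - 1) * (s - ε ^ n * ε)) * lε := by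
    ring
  have final : (q * la + (s * lε + ((n:ℝ) - 1) * (s * (((n:ℝ) + 1) * lε))))
      > (a * la + (ε * lε + ((n:ℝ) - 1) * ((ε ^ n * ε) * (((n:ℝ) + 1) * lε)))) := by
    linarith [hT1, hT2, hT3, hεL, hε2, key]
  exact final
end

section
/- Fix n ≥ 2 and weights β_1, ..., β_n > 0 summing to 1, and let β* = max_i β_i. For ε ∈ (0, 1/2), define on O = {1,...,n} the distributions P_i^ε with P_i^ε(i) = 1 − ε and P_i^ε(k) = ε/(n−1) for k ≠ i, and let P^ε be their logarithmic pool. Then Σ_i β_i Δ_i → −∞ as ε → 0⁺, where Δ_i = E_{P^ε}[log P_i^ε] − E_{P_i^ε}[log P_i^ε]. In particular, for all sufficiently small ε, at least one agent has Δ_i < 0. -/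
open Finset Filter

/-- The peaked beliefs `P i ε` with `P i ε (i) = 1 - ε` and mass `ε/(n-1)`
elsewhere. -/
noncomputable def peaked (n : ℕ) (ε : ℝ) (i k : Fin n) : ℝ :=
  if k = i then 1 - ε else ε / (n - 1)

/-- Their logarithmic pool at weights `β`. -/
noncomputable def peakedPool (n : ℕ) (β : Fin n → ℝ) (ε : ℝ) (k : Fin n) : ℝ :=
  (∏ i, peaked n ε i k ^ β i) / ∑ r, ∏ i, peaked n ε i r ^ β i

/-- The welfare gap of agent `i` against the pool. -/
noncomputable def peakedGap (n : ℕ) (β : Fin n → ℝ) (ε : ℝ) (i : Fin n) : ℝ :=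
  (∑ k, peakedPool n β ε k * Real.log (peaked n ε i k)) -
    ∑ k, peaked n ε i k * Real.log (peaked n ε i k)

/-- No universal weights for unanimity: for the peaked family, the β-weighted
sum of welfare gaps tends to `−∞` as `ε → 0⁺`; in particular for all
sufficiently small `ε > 0` some agent has a strictly negative gap. -/
theorem stmt11 {n : ℕ} (hn : 2 ≤ n)
    (β : Fin n → ℝ) (hβ : ∀ i, 0 < β i) (hsum : ∑ i, β i = 1) :
    Tendsto (fun ε : ℝ => ∑ i, β i * peakedGap n β ε i)
      (nhdsWithin 0 (Set.Ioi 0)) atBot ∧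
    ∀ᶠ ε in nhdsWithin (0:ℝ) (Set.Ioi 0), ∃ i, peakedGap n β ε i < 0 := by
  have hn0 : 0 < n := by omega
  haveI : Nonempty (Fin n) := Fin.pos_iff_nonempty.mp hn0
  set b : ℝ := univ.inf' univ_nonempty (fun r => 1 - β r) with hbdef
  have hβlt : ∀ r, β r < 1 := by
    intro r
    have h1 : β r + ∑ i ∈ univ.erase r, β i = 1 := by
      rw [Finset.add_sum_erase _ _ (mem_univ r)]; exact hsum
    have h2 : 0 < ∑ i ∈ univ.erase r, β i := by
      apply Finset.sum_pos (fun i _ => hβ i)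
      rw [← Finset.card_pos, Finset.card_erase_of_mem (mem_univ r), Finset.card_univ,
        Fintype.card_fin]
      omega
    linarith
  have hb : 0 < b := by
    rw [hbdef, Finset.lt_inf'_iff]
    intro r _; linarith [hβlt r]
  have hble : ∀ r, b ≤ 1 - β r := fun r => Finset.inf'_le _ (mem_univ r)
  have hn2 : (2:ℝ) ≤ (n:ℝ) := by exact_mod_cast hn
  have hn1 : (1:ℝ) ≤ (n:ℝ) - 1 := by linarith
  have key : ∀ ε : ℝ, ε ∈ Set.Ioo (0:ℝ) (1/2) →
      ∑ i, β i * peakedGap n β ε i ≤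
        Real.log n + b * Real.log ε + (Real.log 2 + 1 + Real.log ((n:ℝ) - 1)) := by
    rintro ε ⟨hε0, hε2⟩
    have hε1 : ε ≤ 1 := by linarith
    have hpk : ∀ i k, 0 < peaked n ε i k := by
      intro i k; unfold peaked; split
      · linarith
      · exact div_pos hε0 (by linarith)
    set T : Fin n → ℝ := fun r => ∏ i, peaked n ε i r ^ β i with hT
    have hTpos : ∀ r, 0 < T r := fun r =>
      Finset.prod_pos fun i _ => Real.rpow_pos_of_pos (hpk i r) _
    set Z : ℝ := ∑ r, T r with hZ
    have hZpos : 0 < Z := Finset.sum_pos (fun r _ => hTpos r) univ_nonempty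
    have hpool : ∀ k, peakedPool n β ε k = T k / Z := fun k => rfl
    have hpool_nonneg : ∀ k, 0 ≤ peakedPool n β ε k := fun k =>
      (hpool k) ▸ div_nonneg (hTpos k).le hZpos.le
    have hpoolsum : ∑ k, peakedPool n β ε k = 1 := by
      simp only [hpool]
      rw [← Finset.sum_div, ← hZ, div_self hZpos.ne']
    have hlogT : ∀ k, ∑ i, β i * Real.log (peaked n ε i k) = Real.log (T k) := by
      intro k
      simp only [hT]
      rw [Real.log_prod (fun i _ => (Real.rpow_pos_of_pos (hpk i k) (β i)).ne')]
      exact Finset.sum_congr rfl fun i _ => (Real.log_rpow (hpk i k) (β i)).symm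
    have hA : ∑ i, β i * (∑ k, peakedPool n β ε k * Real.log (peaked n ε i k))
        = ∑ k, peakedPool n β ε k * Real.log (T k) := by
      calc ∑ i, β i * (∑ k, peakedPool n β ε k * Real.log (peaked n ε i k))
          = ∑ i, ∑ k, peakedPool n β ε k * (β i * Real.log (peaked n ε i k)) := by
            refine Finset.sum_congr rfl fun i _ => ?_
            rw [Finset.mul_sum]
            exact Finset.sum_congr rfl fun k _ => by ring
        _ = ∑ k, ∑ i, peakedPool n β ε k * (β i * Real.log (peaked n ε i k)) :=
            Finset.sum_comm
        _ = ∑ k, peakedPool n β ε k * Real.log (T k) := by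
            refine Finset.sum_congr rfl fun k _ => ?_
            rw [← Finset.mul_sum, hlogT]
    have hC : ∀ i : Fin n, ∑ k, peaked n ε i k * Real.log (peaked n ε i k)
        = (1 - ε) * Real.log (1 - ε) + ε * Real.log (ε / ((n:ℝ) - 1)) := by
      intro i
      rw [← Finset.add_sum_erase _ _ (mem_univ i)]
      have h1 : peaked n ε i i = 1 - ε := if_pos rfl
      have h2 : ∀ k ∈ univ.erase i, peaked n ε i k * Real.log (peaked n ε i k)
          = (ε / ((n:ℝ) - 1)) * Real.log (ε / ((n:ℝ) - 1)) := by
        intro k hk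
        rw [show peaked n ε i k = ε / ((n:ℝ) - 1) from if_neg (Finset.ne_of_mem_erase hk)]
      rw [h1, Finset.sum_congr rfl h2, Finset.sum_const,
        Finset.card_erase_of_mem (mem_univ i), Finset.card_univ, Fintype.card_fin,
        nsmul_eq_mul]
      have hcast : ((n - 1 : ℕ) : ℝ) = (n:ℝ) - 1 := by
        rw [Nat.cast_sub (by omega)]; norm_num
      have hmul : ((n:ℝ) - 1) * (ε / ((n:ℝ) - 1)) = ε := by
        field_simp
      rw [hcast, ← mul_assoc, hmul]
    have hgap : ∑ i, β i * peakedGap n β ε i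
        = (∑ k, peakedPool n β ε k * Real.log (T k))
          - ((1 - ε) * Real.log (1 - ε) + ε * Real.log (ε / ((n:ℝ) - 1))) := by
      unfold peakedGap
      rw [Finset.sum_congr rfl (fun i _ => mul_sub (β i) _ _), Finset.sum_sub_distrib, hA]
      congr 1
      rw [Finset.sum_congr rfl (fun i _ => by rw [hC i]), ← Finset.sum_mul, hsum, one_mul]
    have hTleZ : ∀ k, T k ≤ Z :=
      fun k => Finset.single_le_sum (fun r _ => (hTpos r).le) (mem_univ k)
    have hA_le : ∑ k, peakedPool n β ε k * Real.log (T k) ≤ Real.log Z := by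
      calc ∑ k, peakedPool n β ε k * Real.log (T k)
          ≤ ∑ k, peakedPool n β ε k * Real.log Z :=
            Finset.sum_le_sum fun k _ =>
              mul_le_mul_of_nonneg_left (Real.log_le_log (hTpos k) (hTleZ k)) (hpool_nonneg k)
        _ = Real.log Z := by rw [← Finset.sum_mul, hpoolsum, one_mul]
    have hTb : ∀ r, T r ≤ ε ^ b := by
      intro r
      have h1 : T r ≤ ∏ i, (if i = r then (1:ℝ) else ε) ^ β i := by
        simp only [hT]
        refine Finset.prod_le_prod (fun i _ => (Real.rpow_pos_of_pos (hpk i r) _).le)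
          (fun i _ => Real.rpow_le_rpow (hpk i r).le ?_ (hβ i).le)
        unfold peaked
        rcases eq_or_ne i r with h | h
        · subst h; rw [if_pos rfl, if_pos rfl]; linarith
        · rw [if_neg (fun hh => h hh.symm), if_neg h]
          exact (div_le_self hε0.le (by linarith)).trans (le_refl ε)
      have h2 : ∏ i, (if i = r then (1:ℝ) else ε) ^ β i = ε ^ (1 - β r) := by
        rw [← Finset.mul_prod_erase univ _ (mem_univ r), if_pos rfl, Real.one_rpow, one_mul,
          Finset.prod_congr rfl (fun i hi => by rw [if_neg (Finset.ne_of_mem_erase hi)]),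
          ← Real.rpow_sum_of_pos hε0]
        congr 1
        have h3 : β r + ∑ i ∈ univ.erase r, β i = 1 := by
          rw [Finset.add_sum_erase _ _ (mem_univ r)]; exact hsum
        linarith
      rw [h2] at h1
      exact h1.trans (Real.rpow_le_rpow_of_exponent_ge hε0 hε1 (hble r))
    have hZle : Z ≤ (n:ℝ) * ε ^ b := by
      calc Z ≤ ∑ _r : Fin n, ε ^ b := Finset.sum_le_sum fun r _ => hTb r
        _ = (n:ℝ) * ε ^ b := by
          rw [Finset.sum_const, Finset.card_univ, Fintype.card_fin, nsmul_eq_mul]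
    have hlogZ : Real.log Z ≤ Real.log n + b * Real.log ε := by
      calc Real.log Z ≤ Real.log ((n:ℝ) * ε ^ b) := Real.log_le_log hZpos hZle
        _ = Real.log n + b * Real.log ε := by
          rw [Real.log_mul (by positivity) (Real.rpow_pos_of_pos hε0 b).ne',
            Real.log_rpow hε0]
    have hlog1e : -((1 - ε) * Real.log (1 - ε)) ≤ Real.log 2 := by
      have h1 : Real.log (1/2) ≤ Real.log (1 - ε) :=
        Real.log_le_log (by norm_num) (by linarith)
      have h1' : -Real.log 2 ≤ Real.log (1 - ε) := by
        rwa [Real.log_div one_ne_zero two_ne_zero, Real.log_one, zero_sub] at h1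
      have h2 : Real.log (1 - ε) ≤ 0 := Real.log_nonpos (by linarith) (by linarith)
      nlinarith [Real.log_pos (by norm_num : (1:ℝ) < 2)]
    have hεlog : -(ε * Real.log (ε / ((n:ℝ) - 1))) ≤ 1 + Real.log ((n:ℝ) - 1) := by
      rw [Real.log_div hε0.ne' (by linarith : (n:ℝ) - 1 ≠ 0)]
      have h1 : Real.log ε⁻¹ ≤ ε⁻¹ - 1 := Real.log_le_sub_one_of_pos (by positivity)
      rw [Real.log_inv] at h1
      have h2 : ε * (-Real.log ε) ≤ ε * (ε⁻¹ - 1) := mul_le_mul_of_nonneg_left h1 hε0.le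
      have h3 : ε * (ε⁻¹ - 1) = 1 - ε := by field_simp
      have h4 : 0 ≤ Real.log ((n:ℝ) - 1) := Real.log_nonneg hn1
      nlinarith [mul_nonneg (by linarith : (0:ℝ) ≤ 1 - ε) h4]
    rw [hgap]
    have := hA_le.trans hlogZ
    linarith
  have htendsto : Tendsto
      (fun ε : ℝ => Real.log n + b * Real.log ε + (Real.log 2 + 1 + Real.log ((n:ℝ) - 1)))
      (nhdsWithin (0:ℝ) (Set.Ioi 0)) atBot := by
    apply tendsto_atBot_add_const_right
    apply tendsto_atBot_add_const_left
    exact Tendsto.const_mul_atBot hb Real.tendsto_log_nhdsGT_zero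
  have hmain : Tendsto (fun ε : ℝ => ∑ i, β i * peakedGap n β ε i)
      (nhdsWithin (0:ℝ) (Set.Ioi 0)) atBot := by
    refine tendsto_atBot_mono' _ ?_ htendsto
    filter_upwards [Ioo_mem_nhdsGT (by norm_num : (0:ℝ) < 1/2)] with ε hε
    exact key ε hε
  refine ⟨hmain, ?_⟩
  filter_upwards [hmain.eventually (eventually_lt_atBot 0)] with ε hε
  by_contra h'
  push_neg at h'
  exact absurd (Finset.sum_nonneg fun i _ => mul_nonneg (hβ i).le (h' i)) (not_le.mpr hε)
end

section
/- Let P be a strictly positive distribution on a finite set O with tilt functions h_i : O → ℝ satisfying Σ_{i=1}^n β_i h_i(o) = 0 for all o, where β_i > 0 sum to 1. For ε ≥ 0, define P_i^{(ε)}(o) = P(o) e^{ε h_i(o)} / E_P[e^{ε h_i}], and let Δ_i(ε) = E_P[log P_i^{(ε)}] − E_{P_i^{(ε)}}[log P_i^{(ε)}]. Then Δ_i(0) = 0, Δ_i'(0) = −Cov_P(h_i, log P), and consequently Σ_i β_i Δ_i'(0) = 0, so the derivatives Δ_i'(0) cannot all be strictly positive. -/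
open Finset

section Aux

variable {O : Type*} [Fintype O]

lemma aux_Zpos (P : O → ℝ) (hP : ∀ o, 0 < P o) (hP1 : ∑ o, P o = 1)
    (f : O → ℝ) (ε : ℝ) : 0 < ∑ x, P x * Real.exp (ε * f x) := by
  have hne : (Finset.univ : Finset O).Nonempty := by
    rcases (Finset.univ : Finset O).eq_empty_or_nonempty with h | h
    · rw [h, Finset.sum_empty] at hP1; norm_num at hP1
    · exact h
  exact Finset.sum_pos (fun x _ => mul_pos (hP x) (Real.exp_pos _)) hne

lemma aux_eq (P : O → ℝ) (hP : ∀ o, 0 < P o) (hP1 : ∑ o, P o = 1) (f : O → ℝ) (ε : ℝ) :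
    ((∑ o, P o * Real.log (P o * Real.exp (ε * f o) / ∑ x, P x * Real.exp (ε * f x))) -
      ∑ o, (P o * Real.exp (ε * f o) / ∑ x, P x * Real.exp (ε * f x)) *
        Real.log (P o * Real.exp (ε * f o) / ∑ x, P x * Real.exp (ε * f x)))
      = (∑ o, P o * Real.log (P o)) + ε * (∑ o, P o * f o)
        - ((∑ o, P o * Real.exp (ε * f o) * Real.log (P o))
            + ε * ∑ o, P o * Real.exp (ε * f o) * f o) / ∑ x, P x * Real.exp (ε * f x) := by
  set Z : ℝ := ∑ x, P x * Real.exp (ε * f x) with hZdef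
  have hZ : 0 < Z := aux_Zpos P hP hP1 f ε
  have hlog : ∀ o, Real.log (P o * Real.exp (ε * f o) / Z)
      = Real.log (P o) + ε * f o - Real.log Z := by
    intro o
    rw [Real.log_div (mul_pos (hP o) (Real.exp_pos _)).ne' hZ.ne',
      Real.log_mul (hP o).ne' (Real.exp_pos _).ne', Real.log_exp]
  have e1 : (∑ o, P o * Real.log (P o * Real.exp (ε * f o) / Z))
      = (∑ o, P o * Real.log (P o)) + ε * (∑ o, P o * f o) - Real.log Z := by
    calc (∑ o, P o * Real.log (P o * Real.exp (ε * f o) / Z))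
        = ∑ o, (P o * Real.log (P o) + ε * (P o * f o) - P o * Real.log Z) :=
          Finset.sum_congr rfl (fun o _ => by rw [hlog o]; ring)
      _ = _ := by
          rw [Finset.sum_sub_distrib, Finset.sum_add_distrib, ← Finset.mul_sum,
            ← Finset.sum_mul, hP1, one_mul]
  have e2 : (∑ o, (P o * Real.exp (ε * f o) / Z) *
        Real.log (P o * Real.exp (ε * f o) / Z))
      = ((∑ o, P o * Real.exp (ε * f o) * Real.log (P o))
          + ε * ∑ o, P o * Real.exp (ε * f o) * f o) / Z - Real.log Z := by
    calc (∑ o, (P o * Real.exp (ε * f o) / Z) * Real.log (P o * Real.exp (ε * f o) / Z))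
        = (∑ o, (P o * Real.exp (ε * f o) * Real.log (P o)
            + ε * (P o * Real.exp (ε * f o) * f o)
            - P o * Real.exp (ε * f o) * Real.log Z)) / Z := by
          rw [Finset.sum_div]
          refine Finset.sum_congr rfl (fun o _ => ?_)
          rw [hlog o]; field_simp
      _ = ((∑ o, P o * Real.exp (ε * f o) * Real.log (P o))
            + ε * ∑ o, P o * Real.exp (ε * f o) * f o - Z * Real.log Z) / Z := by
          rw [Finset.sum_sub_distrib, Finset.sum_add_distrib, ← Finset.mul_sum,
            ← Finset.sum_mul, hZdef]
      _ = _ := by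
          rw [sub_div, mul_comm Z (Real.log Z), mul_div_assoc, div_self hZ.ne', mul_one]
  rw [e1, e2]; ring

lemma aux_deriv (P : O → ℝ) (hP : ∀ o, 0 < P o) (hP1 : ∑ o, P o = 1) (f : O → ℝ) :
    HasDerivAt (fun ε : ℝ => (∑ o, P o * Real.log (P o)) + ε * (∑ o, P o * f o)
        - ((∑ o, P o * Real.exp (ε * f o) * Real.log (P o))
            + ε * ∑ o, P o * Real.exp (ε * f o) * f o) / ∑ x, P x * Real.exp (ε * f x))
      (-((∑ o, P o * (f o * Real.log (P o))) -
        (∑ o, P o * f o) * (∑ o, P o * Real.log (P o)))) 0 := by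
  have hZ : HasDerivAt (fun ε : ℝ => ∑ x, P x * Real.exp (ε * f x))
      (∑ x, P x * (Real.exp (0 * f x) * f x)) 0 := by
    apply HasDerivAt.fun_sum
    intro x _
    exact (((hasDerivAt_mul_const (f x)).exp)).const_mul (P x)
  have hA : HasDerivAt (fun ε : ℝ => ∑ o, P o * Real.exp (ε * f o) * Real.log (P o))
      (∑ o, P o * (Real.exp (0 * f o) * f o) * Real.log (P o)) 0 := by
    apply HasDerivAt.fun_sum
    intro x _
    exact ((((hasDerivAt_mul_const (f x)).exp)).const_mul (P x)).mul_const _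
  have hB : HasDerivAt (fun ε : ℝ => ∑ o, P o * Real.exp (ε * f o) * f o)
      (∑ o, P o * (Real.exp (0 * f o) * f o) * f o) 0 := by
    apply HasDerivAt.fun_sum
    intro x _
    exact ((((hasDerivAt_mul_const (f x)).exp)).const_mul (P x)).mul_const _
  have hZ0 : (∑ x, P x * Real.exp ((0:ℝ) * f x)) = 1 := by
    simp [hP1]
  have hlin : HasDerivAt (fun ε : ℝ => ε * ∑ o, P o * Real.exp (ε * f o) * f o)
      (1 * (∑ o, P o * Real.exp ((0:ℝ) * f o) * f o)
        + 0 * (∑ o, P o * (Real.exp (0 * f o) * f o) * f o)) 0 :=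
    (hasDerivAt_id 0).mul hB
  have hnum := hA.add hlin
  have hquot := hnum.div hZ (by rw [hZ0]; norm_num)
  have hfull := ((hasDerivAt_const (0:ℝ) (∑ o, P o * Real.log (P o))).add
    (hasDerivAt_mul_const (∑ o, P o * f o))).sub hquot
  refine hfull.congr_deriv ?_
  simp only [Pi.add_apply, Real.exp_zero, zero_mul, mul_one, one_mul, mul_zero, add_zero, zero_add]
  have h3 : (∑ o, P o * f o * Real.log (P o)) = ∑ o, P o * (f o * Real.log (P o)) := by
    exact Finset.sum_congr rfl fun o _ => by ring
  rw [hP1, h3]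
  ring

end Aux

/-- Local impossibility of strict unanimity at a fixed pool: for exponential
tilts `P_i^{(ε)} ∝ P e^{ε h_i}` with `∑ i, β i • h i ≡ 0`, the welfare gaps
satisfy `Δ_i(0) = 0`, `Δ_i'(0) = −Cov_P(h_i, log P)`, the β-weighted sum of
derivatives vanishes, and hence the derivatives cannot all be strictly
positive. -/
theorem stmt13 {O : Type*} [Fintype O] {n : ℕ}
    (P : O → ℝ) (hP : ∀ o, 0 < P o) (hP1 : ∑ o, P o = 1)
    (h : Fin n → O → ℝ) (β : Fin n → ℝ) (hβ : ∀ i, 0 < β i) (hsum : ∑ i, β i = 1)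
    (hzero : ∀ o, ∑ i, β i * h i o = 0) :
    let Pt : Fin n → ℝ → O → ℝ := fun i ε o =>
      P o * Real.exp (ε * h i o) / ∑ x, P x * Real.exp (ε * h i x)
    let Δ : Fin n → ℝ → ℝ := fun i ε =>
      (∑ o, P o * Real.log (Pt i ε o)) - ∑ o, Pt i ε o * Real.log (Pt i ε o)
    let Cov : Fin n → ℝ := fun i =>
      (∑ o, P o * (h i o * Real.log (P o))) -
        (∑ o, P o * h i o) * (∑ o, P o * Real.log (P o))
    (∀ i, Δ i 0 = 0) ∧ (∀ i, HasDerivAt (Δ i) (-(Cov i)) 0) ∧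
      (∑ i, β i * (-(Cov i)) = 0) ∧ ¬ (∀ i, 0 < -(Cov i)) := by
  intro Pt Δ Cov
  have hΔeq : ∀ i, Δ i = fun ε : ℝ =>
      (∑ o, P o * Real.log (P o)) + ε * (∑ o, P o * h i o)
        - ((∑ o, P o * Real.exp (ε * h i o) * Real.log (P o))
            + ε * ∑ o, P o * Real.exp (ε * h i o) * (h i o)) / ∑ x, P x * Real.exp (ε * h i x) := by
    intro i
    funext ε
    exact aux_eq P hP hP1 (h i) ε
  have h0 : ∀ i, Δ i 0 = 0 := by
    intro i
    rw [hΔeq i]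
    simp [hP1]
  have hderiv : ∀ i, HasDerivAt (Δ i) (-(Cov i)) 0 := by
    intro i
    rw [hΔeq i]
    exact aux_deriv P hP hP1 (h i)
  have t1 : ∑ i, β i * ∑ o, P o * (h i o * Real.log (P o)) = 0 := by
    simp_rw [Finset.mul_sum]
    rw [Finset.sum_comm]
    apply Finset.sum_eq_zero
    intro o _
    calc ∑ i, β i * (P o * (h i o * Real.log (P o)))
        = (∑ i, β i * h i o) * (P o * Real.log (P o)) := by
          rw [Finset.sum_mul]
          exact Finset.sum_congr rfl fun i _ => by ring
      _ = 0 := by rw [hzero o, zero_mul]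
  have t2 : ∑ i, β i * ∑ o, P o * h i o = 0 := by
    simp_rw [Finset.mul_sum]
    rw [Finset.sum_comm]
    apply Finset.sum_eq_zero
    intro o _
    calc ∑ i, β i * (P o * h i o)
        = (∑ i, β i * h i o) * P o := by
          rw [Finset.sum_mul]
          exact Finset.sum_congr rfl fun i _ => by ring
      _ = 0 := by rw [hzero o, zero_mul]
  have hsum0 : ∑ i, β i * (-(Cov i)) = 0 := by
    have : ∀ i, β i * (-(Cov i)) =
        -(β i * ∑ o, P o * (h i o * Real.log (P o)))
          + (β i * ∑ o, P o * h i o) * (∑ o, P o * Real.log (P o)) := by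
      intro i; show β i * (-((∑ o, P o * (h i o * Real.log (P o))) -
        (∑ o, P o * h i o) * (∑ o, P o * Real.log (P o)))) = _; ring
    rw [Finset.sum_congr rfl fun i _ => this i, Finset.sum_add_distrib,
      Finset.sum_neg_distrib, ← Finset.sum_mul, t1, t2]
    ring
  refine ⟨h0, hderiv, hsum0, ?_⟩
  intro hall
  have hn : (Finset.univ : Finset (Fin n)).Nonempty := by
    rcases (Finset.univ : Finset (Fin n)).eq_empty_or_nonempty with hc | hc
    · rw [hc, Finset.sum_empty] at hsum; norm_num at hsum
    · exact hc
  have := Finset.sum_pos (fun i _ => mul_pos (hβ i) (hall i)) hn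
  rw [hsum0] at this
  exact lt_irrefl 0 this
end
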